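/- arXiv:2604.26204 — 7 statements merged into one kernel-verified Lean document; each statement's English description precedes it below -/
import Mathlib

section
/- Let χ ∈ ℚ and for i = 1, 2 let v_i = (r_i, d_iH + k_if + D_i, a_i) with r_i ≠ 0, d_i, k_i ∈ ℚ and D_i ∈ N, and assume r₂d₁ = r₁d₂. Set v := v₁ + v₂, r := r₁ + r₂ and D := D₁ + D₂. Then −(D,D) + ⟨v,v⟩ + r²χ = r·((−(D₁,D₁) + ⟨v₁,v₁⟩ + r₁²χ)/r₁ + (−(D₂,D₂) + ⟨v₂,v₂⟩ + r₂²χ)/r₂). -/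
/-!
As `(H·f) = 1` and `Dᵢ ⊥ H, f`, one has `(ξᵢ·ξᵢ) = 2dᵢkᵢ + (Dᵢ·Dᵢ)`, so the `(D, D)` terms cancel
and the identity reduces to `(d₁ + d₂)(k₁ + k₂) = r (d₁k₁/r₁ + d₂k₂/r₂)`, which holds because
`d₁/r₁ = d₂/r₂`.
-/

theorem apply_self_smul_add_smul_add {R M : Type*} [CommRing R] [AddCommGroup M] [Module R M]
    (B : M →ₗ[R] M →ₗ[R] R) (hB : ∀ x y : M, B x y = B y x) {H f D : M}
    (hHH : B H H = 0) (hff : B f f = 0) (hHf : B H f = 1) (hDH : B D H = 0) (hDf : B D f = 0)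
    (d k : R) :
    B (d • H + k • f + D) (d • H + k • f + D) = 2 * (d * k) + B D D := by
  have hfH : B f H = 1 := hB f H ▸ hHf
  have hHD : B H D = 0 := hB H D ▸ hDH
  have hfD : B f D = 0 := hB f D ▸ hDf
  simp only [map_add, map_smul, LinearMap.add_apply, LinearMap.smul_apply, smul_eq_mul,
    hHH, hff, hHf, hfH, hDH, hDf, hHD, hfD]
  ring

theorem add_mul_add_eq_add_mul_div_add_div_of_mul_eq_mul {K : Type*} [Field K]
    {r₁ r₂ d₁ d₂ : K} (hr₁ : r₁ ≠ 0) (hr₂ : r₂ ≠ 0) (hd : r₂ * d₁ = r₁ * d₂) (k₁ k₂ : K) :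
    (d₁ + d₂) * (k₁ + k₂) = (r₁ + r₂) * (d₁ * k₁ / r₁ + d₂ * k₂ / r₂) := by
  field_simp
  linear_combination (r₁ * k₂ - r₂ * k₁) * hd

theorem stmt1_general {V : Type*} [AddCommGroup V] [Module ℚ V]
    (B : V →ₗ[ℚ] V →ₗ[ℚ] ℚ) (hB : ∀ x y : V, B x y = B y x)
    (H f : V) (hHH : B H H = 0) (hff : B f f = 0) (hHf : B H f = 1)
    (χ r₁ r₂ d₁ d₂ k₁ k₂ a₁ a₂ : ℚ) (D₁ D₂ : V)
    (hr₁ : r₁ ≠ 0) (hr₂ : r₂ ≠ 0)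
    (hD₁f : B D₁ f = 0) (hD₁H : B D₁ H = 0)
    (hD₂f : B D₂ f = 0) (hD₂H : B D₂ H = 0)
    (hd : r₂ * d₁ = r₁ * d₂) :
    let ξ₁ : V := d₁ • H + k₁ • f + D₁
    let ξ₂ : V := d₂ • H + k₂ • f + D₂
    let r : ℚ := r₁ + r₂
    let a : ℚ := a₁ + a₂
    let D : V := D₁ + D₂
    (-(B D D) + (B (ξ₁ + ξ₂) (ξ₁ + ξ₂) - 2 * r * a) + r ^ 2 * χ
      = r * ((-(B D₁ D₁) + (B ξ₁ ξ₁ - 2 * r₁ * a₁) + r₁ ^ 2 * χ) / r₁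
           + (-(B D₂ D₂) + (B ξ₂ ξ₂ - 2 * r₂ * a₂) + r₂ ^ 2 * χ) / r₂)) := by
  intro ξ₁ ξ₂ r a D
  have hξ : ξ₁ + ξ₂ = (d₁ + d₂) • H + (k₁ + k₂) • f + D := by module
  have hDH : B D H = 0 := by simp only [D, map_add, LinearMap.add_apply, hD₁H, hD₂H, add_zero]
  have hDf : B D f = 0 := by simp only [D, map_add, LinearMap.add_apply, hD₁f, hD₂f, add_zero]
  rw [hξ, apply_self_smul_add_smul_add B hB hHH hff hHf hDH hDf,
    apply_self_smul_add_smul_add B hB hHH hff hHf hD₁H hD₁f,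
    apply_self_smul_add_smul_add B hB hHH hff hHf hD₂H hD₂f,
    add_mul_add_eq_add_mul_div_add_div_of_mul_eq_mul hr₁ hr₂ hd]
  field_simp
  ring

/-- With `ξᵢ = dᵢH + kᵢf + Dᵢ`, `Dᵢ ∈ N = {D : (D·f) = (D·H) = 0}`, `rᵢ ≠ 0`
and `r₂d₁ = r₁d₂`, setting `v := v₁ + v₂`, `r := r₁ + r₂`, `D := D₁ + D₂`:
`−(D,D) + ⟨v,v⟩ + r²χ
  = r·((−(D₁,D₁) + ⟨v₁,v₁⟩ + r₁²χ)/r₁ + (−(D₂,D₂) + ⟨v₂,v₂⟩ + r₂²χ)/r₂)`,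
where the Mukai square of `(r, ξ, a)` is `(ξ·ξ) − 2ra`. -/
theorem stmt1 {V : Type*} [AddCommGroup V] [Module ℚ V] [FiniteDimensional ℚ V]
    (B : V →ₗ[ℚ] V →ₗ[ℚ] ℚ) (hB : ∀ x y : V, B x y = B y x)
    (H f : V) (hHH : B H H = 0) (hff : B f f = 0) (hHf : B H f = 1)
    (χ r₁ r₂ d₁ d₂ k₁ k₂ a₁ a₂ : ℚ) (D₁ D₂ : V)
    (hr₁ : r₁ ≠ 0) (hr₂ : r₂ ≠ 0)
    (hD₁f : B D₁ f = 0) (hD₁H : B D₁ H = 0)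
    (hD₂f : B D₂ f = 0) (hD₂H : B D₂ H = 0)
    (hd : r₂ * d₁ = r₁ * d₂) :
    let ξ₁ : V := d₁ • H + k₁ • f + D₁
    let ξ₂ : V := d₂ • H + k₂ • f + D₂
    let r : ℚ := r₁ + r₂
    let a : ℚ := a₁ + a₂
    let D : V := D₁ + D₂
    (-(B D D) + (B (ξ₁ + ξ₂) (ξ₁ + ξ₂) - 2 * r * a) + r ^ 2 * χ
      = r * ((-(B D₁ D₁) + (B ξ₁ ξ₁ - 2 * r₁ * a₁) + r₁ ^ 2 * χ) / r₁
           + (-(B D₂ D₂) + (B ξ₂ ξ₂ - 2 * r₂ * a₂) + r₂ ^ 2 * χ) / r₂)) :=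
  stmt1_general B hB H f hHH hff hHf χ r₁ r₂ d₁ d₂ k₁ k₂ a₁ a₂ D₁ D₂ hr₁ hr₂ hD₁f hD₁H hD₂f hD₂H hd
end

section
/- Let χ ∈ ℚ and for i = 1, 2 let v_i = (r_i, d_iH + k_if + D_i, a_i) with r_i > 0, d_i, k_i ∈ ℚ and D_i ∈ N. Assume r₂d₁ = r₁d₂, (D_i, D_i) ≤ 0 and ⟨v_i, v_i⟩ ≥ −r_i²χ for i = 1, 2. Set v := v₁ + v₂, r := r₁ + r₂ and D := D₁ + D₂. Then |r₁²((D,D) − ⟨v,v⟩) − r²((D₁,D₁) − ⟨v₁,v₁⟩)| ≤ r²(−(D,D) + ⟨v,v⟩ + r²χ). -/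
/-!
Only the hyperbolic part `dH + kf` of `ξ` contributes a cross term, so `⟨v, v⟩ - (D, D) = 2dk - 2ra`.
Since `v₁` and `v₂` have the same slope `μ = dᵢ / rᵢ`, this equals `r τ - r² χ` with
`τ = 2(μk - a) + rχ`, additive in `v`, and the Bogomolov bounds together with `(Dᵢ, Dᵢ) ≤ 0` give
`τᵢ ≥ 0`. In terms of the `τᵢ` the two sides of the inequality become `r r₁ (r₂τ₁ - r₁τ₂)` and
`r³ (τ₁ + τ₂)`.
-/

section HyperbolicPlane

variable {R M : Type*} [CommRing R] [AddCommGroup M] [Module R M]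
  {B : M →ₗ[R] M →ₗ[R] R} {H f : M}

theorem LinearMap.apply_smul_add_smul_add_of_isOrtho (hB : ∀ x y, B x y = B y x)
    (hHH : B H H = 0) (hff : B f f = 0) (hHf : B H f = 1) {D D' : M}
    (hDf : B D f = 0) (hDH : B D H = 0) (hD'f : B D' f = 0) (hD'H : B D' H = 0)
    (d k d' k' : R) :
    B (d • H + k • f + D) (d' • H + k' • f + D') = d * k' + k * d' + B D D' := by
  have hfH : B f H = 1 := hB f H ▸ hHf
  have hHD' : B H D' = 0 := hB H D' ▸ hD'H
  have hfD' : B f D' = 0 := hB f D' ▸ hD'f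
  simp only [map_add, map_smul, LinearMap.add_apply, LinearMap.smul_apply, smul_eq_mul,
    hHH, hff, hHf, hfH, hDf, hDH, hHD', hfD']
  ring

end HyperbolicPlane

theorem abs_mul_sub_mul_le_sq_mul {α : Type*} [CommRing α] [LinearOrder α] [IsStrictOrderedRing α]
    {r₁ r₂ τ₁ τ₂ : α} (hr₁ : 0 ≤ r₁) (hr₂ : 0 ≤ r₂) (hτ₁ : 0 ≤ τ₁) (hτ₂ : 0 ≤ τ₂) :
    |r₁ * (r₂ * τ₁ - r₁ * τ₂)| ≤ (r₁ + r₂) ^ 2 * (τ₁ + τ₂) := by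
  rw [abs_le]
  have hr₁r₂ := mul_nonneg hr₁ hr₂
  constructor <;> nlinarith [mul_nonneg hr₁r₂ hτ₁, mul_nonneg hr₁r₂ hτ₂, mul_nonneg (sq_nonneg r₁) hτ₁,
    mul_nonneg (sq_nonneg r₁) hτ₂, mul_nonneg (sq_nonneg r₂) hτ₁, mul_nonneg (sq_nonneg r₂) hτ₂]

theorem abs_sq_mul_sub_sq_mul_le {K : Type*} [Field K] [LinearOrder K] [IsStrictOrderedRing K]
    {χ r₁ r₂ d₁ d₂ k₁ k₂ a₁ a₂ : K} (hr₁ : 0 < r₁) (hr₂ : 0 < r₂) (hd : r₂ * d₁ = r₁ * d₂)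
    (h₁ : 0 ≤ 2 * d₁ * k₁ - 2 * r₁ * a₁ + r₁ ^ 2 * χ)
    (h₂ : 0 ≤ 2 * d₂ * k₂ - 2 * r₂ * a₂ + r₂ ^ 2 * χ) :
    |(r₁ + r₂) ^ 2 * (2 * d₁ * k₁ - 2 * r₁ * a₁)
        - r₁ ^ 2 * (2 * (d₁ + d₂) * (k₁ + k₂) - 2 * (r₁ + r₂) * (a₁ + a₂))|
      ≤ (r₁ + r₂) ^ 2 * (2 * (d₁ + d₂) * (k₁ + k₂) - 2 * (r₁ + r₂) * (a₁ + a₂)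
          + (r₁ + r₂) ^ 2 * χ) := by
  obtain ⟨μ, rfl, rfl⟩ : ∃ μ, d₁ = r₁ * μ ∧ d₂ = r₂ * μ :=
    ⟨d₁ / r₁, by field_simp, by field_simp; linarith⟩
  set τ₁ := 2 * (μ * k₁ - a₁) + r₁ * χ
  set τ₂ := 2 * (μ * k₂ - a₂) + r₂ * χ
  have hτ₁ : 0 ≤ τ₁ := nonneg_of_mul_nonneg_right (a := r₁) (by linear_combination h₁) hr₁
  have hτ₂ : 0 ≤ τ₂ := nonneg_of_mul_nonneg_right (a := r₂) (by linear_combination h₂) hr₂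
  have hr : 0 < r₁ + r₂ := add_pos hr₁ hr₂
  calc _ = |(r₁ + r₂) * (r₁ * (r₂ * τ₁ - r₁ * τ₂))| := by congr 1; ring
    _ = (r₁ + r₂) * |r₁ * (r₂ * τ₁ - r₁ * τ₂)| := by rw [abs_mul, abs_of_pos hr]
    _ ≤ (r₁ + r₂) * ((r₁ + r₂) ^ 2 * (τ₁ + τ₂)) :=
        mul_le_mul_of_nonneg_left (abs_mul_sub_mul_le_sq_mul hr₁.le hr₂.le hτ₁ hτ₂) hr.le
    _ = _ := by ring

theorem stmt2_general {V : Type*} [AddCommGroup V] [Module ℚ V]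
    (B : V →ₗ[ℚ] V →ₗ[ℚ] ℚ) (hB : ∀ x y : V, B x y = B y x)
    (H f : V) (hHH : B H H = 0) (hff : B f f = 0) (hHf : B H f = 1)
    (χ r₁ r₂ d₁ d₂ k₁ k₂ a₁ a₂ : ℚ) (D₁ D₂ : V)
    (hr₁ : 0 < r₁) (hr₂ : 0 < r₂)
    (hD₁f : B D₁ f = 0) (hD₁H : B D₁ H = 0)
    (hD₂f : B D₂ f = 0) (hD₂H : B D₂ H = 0)
    (hd : r₂ * d₁ = r₁ * d₂)
    (hD₁neg : B D₁ D₁ ≤ 0) (hD₂neg : B D₂ D₂ ≤ 0)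
    (hBog₁ : B (d₁ • H + k₁ • f + D₁) (d₁ • H + k₁ • f + D₁) - 2 * r₁ * a₁ ≥ -(r₁ ^ 2 * χ))
    (hBog₂ : B (d₂ • H + k₂ • f + D₂) (d₂ • H + k₂ • f + D₂) - 2 * r₂ * a₂ ≥ -(r₂ ^ 2 * χ)) :
    let ξ₁ : V := d₁ • H + k₁ • f + D₁
    let ξ₂ : V := d₂ • H + k₂ • f + D₂
    let r : ℚ := r₁ + r₂
    let a : ℚ := a₁ + a₂
    let D : V := D₁ + D₂
    (|r₁ ^ 2 * (B D D - (B (ξ₁ + ξ₂) (ξ₁ + ξ₂) - 2 * r * a))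
        - r ^ 2 * (B D₁ D₁ - (B ξ₁ ξ₁ - 2 * r₁ * a₁))|
      ≤ r ^ 2 * (-(B D D) + (B (ξ₁ + ξ₂) (ξ₁ + ξ₂) - 2 * r * a) + r ^ 2 * χ)) := by
  intro ξ₁ ξ₂ r a D
  have hsum : ξ₁ + ξ₂ = (d₁ + d₂) • H + (k₁ + k₂) • f + D := by module
  have hDf : B D f = 0 := by simp [D, hD₁f, hD₂f]
  have hDH : B D H = 0 := by simp [D, hD₁H, hD₂H]
  have hξξ : B (ξ₁ + ξ₂) (ξ₁ + ξ₂) = 2 * (d₁ + d₂) * (k₁ + k₂) + B D D := by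
    rw [hsum, LinearMap.apply_smul_add_smul_add_of_isOrtho hB hHH hff hHf hDf hDH hDf hDH]; ring
  have hξ₁ : B ξ₁ ξ₁ = 2 * d₁ * k₁ + B D₁ D₁ := by
    rw [LinearMap.apply_smul_add_smul_add_of_isOrtho hB hHH hff hHf hD₁f hD₁H hD₁f hD₁H]; ring
  have hξ₂ : B ξ₂ ξ₂ = 2 * d₂ * k₂ + B D₂ D₂ := by
    rw [LinearMap.apply_smul_add_smul_add_of_isOrtho hB hHH hff hHf hD₂f hD₂H hD₂f hD₂H]; ring
  rw [hξ₁] at hBog₁ ⊢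
  rw [hξ₂] at hBog₂
  rw [hξξ]
  have h₁ : 0 ≤ 2 * d₁ * k₁ - 2 * r₁ * a₁ + r₁ ^ 2 * χ := by linarith
  have h₂ : 0 ≤ 2 * d₂ * k₂ - 2 * r₂ * a₂ + r₂ ^ 2 * χ := by linarith
  simp only [r, a]
  refine le_of_eq_of_le ?_ ((abs_sq_mul_sub_sq_mul_le hr₁ hr₂ hd h₁ h₂).trans_eq ?_)
  · congr 1; ring
  · ring

/-- With `ξᵢ = dᵢH + kᵢf + Dᵢ`, `Dᵢ ∈ N`, `rᵢ > 0`, `r₂d₁ = r₁d₂`,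
`(Dᵢ,Dᵢ) ≤ 0` and the Bogomolov bounds `⟨vᵢ,vᵢ⟩ ≥ −rᵢ²χ`:  with
`v := v₁ + v₂`, `r := r₁ + r₂`, `D := D₁ + D₂`,
`|r₁²((D,D) − ⟨v,v⟩) − r²((D₁,D₁) − ⟨v₁,v₁⟩)| ≤ r²(−(D,D) + ⟨v,v⟩ + r²χ)`. -/
theorem stmt2 {V : Type*} [AddCommGroup V] [Module ℚ V] [FiniteDimensional ℚ V]
    (B : V →ₗ[ℚ] V →ₗ[ℚ] ℚ) (hB : ∀ x y : V, B x y = B y x)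
    (H f : V) (hHH : B H H = 0) (hff : B f f = 0) (hHf : B H f = 1)
    (χ r₁ r₂ d₁ d₂ k₁ k₂ a₁ a₂ : ℚ) (D₁ D₂ : V)
    (hr₁ : 0 < r₁) (hr₂ : 0 < r₂)
    (hD₁f : B D₁ f = 0) (hD₁H : B D₁ H = 0)
    (hD₂f : B D₂ f = 0) (hD₂H : B D₂ H = 0)
    (hd : r₂ * d₁ = r₁ * d₂)
    (hD₁neg : B D₁ D₁ ≤ 0) (hD₂neg : B D₂ D₂ ≤ 0)
    (hBog₁ : B (d₁ • H + k₁ • f + D₁) (d₁ • H + k₁ • f + D₁) - 2 * r₁ * a₁ ≥ -(r₁ ^ 2 * χ))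
    (hBog₂ : B (d₂ • H + k₂ • f + D₂) (d₂ • H + k₂ • f + D₂) - 2 * r₂ * a₂ ≥ -(r₂ ^ 2 * χ)) :
    let ξ₁ : V := d₁ • H + k₁ • f + D₁
    let ξ₂ : V := d₂ • H + k₂ • f + D₂
    let r : ℚ := r₁ + r₂
    let a : ℚ := a₁ + a₂
    let D : V := D₁ + D₂
    (|r₁ ^ 2 * (B D D - (B (ξ₁ + ξ₂) (ξ₁ + ξ₂) - 2 * r * a))
        - r ^ 2 * (B D₁ D₁ - (B ξ₁ ξ₁ - 2 * r₁ * a₁))|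
      ≤ r ^ 2 * (-(B D D) + (B (ξ₁ + ξ₂) (ξ₁ + ξ₂) - 2 * r * a) + r ^ 2 * χ)) :=
  stmt2_general B hB H f hHH hff hHf χ r₁ r₂ d₁ d₂ k₁ k₂ a₁ a₂ D₁ D₂ hr₁ hr₂ hD₁f hD₁H hD₂f hD₂H hd
    hD₁neg hD₂neg hBog₁ hBog₂
end

section
/- Assume in addition that (D, D) ≤ 0 for every D ∈ N (negative semidefiniteness on N). Let χ ∈ ℚ and let v_i = (r_i, ξ_i, a_i), i = 1, 2, with r_i > 0, (ξ₁·f)·r₂ = (ξ₂·f)·r₁, and ⟨v_i, v_i⟩ ≥ −r_i²χ for i = 1, 2. Set v := v₁ + v₂ and r := r₁ + r₂. Then 0 ≤ ⟨v₁,v₁⟩ + r₁²χ ≤ (r₁/r)·(⟨v,v⟩ + r²χ). (This is the Remark following the paper's Lemma on finiteness of the invariants (⟨v₁²⟩, D(v₁)).) -/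
/-!
Put `w := r₂ξ₁ − r₁ξ₂` and `Δ(r, ξ, a) := ⟨v, v⟩ + r²χ = (ξ·ξ) − 2ra + r²χ`. Expanding gives
`r₁r₂ Δ(v) = r (r₂ Δ(v₁) + r₁ Δ(v₂)) − (w·w)`, i.e. `Δ(v)/r = Δ(v₁)/r₁ + Δ(v₂)/r₂ − (w·w)/(r r₁ r₂)`.
The slope condition says `(w·f) = 0`, and then `w − (w·H) f` lies in `N` and has the same square
as `w`, so `(w·w) ≤ 0`. Hence `Δ(v)/r ≥ Δ(v₁)/r₁ ≥ 0`.
-/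

section BilinForm

variable {R M : Type*} [CommRing R] [AddCommGroup M] [Module R M]
  (B : M →ₗ[R] M →ₗ[R] R)

def mukaiDiscr (χ r : R) (ξ : M) (a : R) : R :=
  B ξ ξ - 2 * r * a + r ^ 2 * χ

variable {B}

theorem apply_self_nonpos_of_apply_fiber_eq_zero [LE R] (hB : ∀ x y, B x y = B y x)
    {H f : M} (hff : B f f = 0) (hHf : B H f = 1)
    (hN : ∀ D, B D f = 0 → B D H = 0 → B D D ≤ 0) {w : M} (hw : B w f = 0) :
    B w w ≤ 0 := by
  set D := w - B w H • f
  have hDf : B D f = 0 := by simp [D, hw, hff]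
  have hDH : B D H = 0 := by simp [D, hB f H, hHf]
  have hDD : B D D = B w w := by simp [D, hw, hff, hB f w]
  exact hDD ▸ hN D hDf hDH

theorem mul_mul_mukaiDiscr_add (hB : ∀ x y, B x y = B y x) (χ r₁ r₂ a₁ a₂ : R) (ξ₁ ξ₂ : M) :
    r₁ * r₂ * mukaiDiscr B χ (r₁ + r₂) (ξ₁ + ξ₂) (a₁ + a₂) =
      (r₁ + r₂) * (r₂ * mukaiDiscr B χ r₁ ξ₁ a₁ + r₁ * mukaiDiscr B χ r₂ ξ₂ a₂) -
        B (r₂ • ξ₁ - r₁ • ξ₂) (r₂ • ξ₁ - r₁ • ξ₂) := by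
  simp only [mukaiDiscr, map_add, map_sub, map_smul, LinearMap.add_apply, LinearMap.sub_apply,
    LinearMap.smul_apply, smul_eq_mul, hB ξ₂ ξ₁]
  ring

end BilinForm

theorem stmt3_general {V : Type*} [AddCommGroup V] [Module ℚ V]
    (B : V →ₗ[ℚ] V →ₗ[ℚ] ℚ) (hB : ∀ x y : V, B x y = B y x)
    (H f : V) (hff : B f f = 0) (hHf : B H f = 1)
    (hNneg : ∀ D : V, B D f = 0 → B D H = 0 → B D D ≤ 0)
    (χ r₁ r₂ a₁ a₂ : ℚ) (ξ₁ ξ₂ : V)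
    (hr₁ : 0 < r₁) (hr₂ : 0 < r₂)
    (hd : B ξ₁ f * r₂ = B ξ₂ f * r₁)
    (hBog₁ : B ξ₁ ξ₁ - 2 * r₁ * a₁ ≥ -(r₁ ^ 2 * χ))
    (hBog₂ : B ξ₂ ξ₂ - 2 * r₂ * a₂ ≥ -(r₂ ^ 2 * χ)) :
    0 ≤ (B ξ₁ ξ₁ - 2 * r₁ * a₁) + r₁ ^ 2 * χ ∧
    (B ξ₁ ξ₁ - 2 * r₁ * a₁) + r₁ ^ 2 * χ
      ≤ (r₁ / (r₁ + r₂)) *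
          ((B (ξ₁ + ξ₂) (ξ₁ + ξ₂) - 2 * (r₁ + r₂) * (a₁ + a₂)) + (r₁ + r₂) ^ 2 * χ) := by
  change 0 ≤ mukaiDiscr B χ r₁ ξ₁ a₁ ∧
    mukaiDiscr B χ r₁ ξ₁ a₁ ≤ r₁ / (r₁ + r₂) * mukaiDiscr B χ (r₁ + r₂) (ξ₁ + ξ₂) (a₁ + a₂)
  have hΔ₁ : 0 ≤ mukaiDiscr B χ r₁ ξ₁ a₁ := by unfold mukaiDiscr; linarith
  have hΔ₂ : 0 ≤ mukaiDiscr B χ r₂ ξ₂ a₂ := by unfold mukaiDiscr; linarith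
  have hw : B (r₂ • ξ₁ - r₁ • ξ₂) f = 0 := by
    simp only [map_sub, map_smul, LinearMap.sub_apply, LinearMap.smul_apply, smul_eq_mul]
    linarith
  have hww := apply_self_nonpos_of_apply_fiber_eq_zero hB hff hHf hNneg hw
  have key := mul_mul_mukaiDiscr_add hB χ r₁ r₂ a₁ a₂ ξ₁ ξ₂
  refine ⟨hΔ₁, ?_⟩
  rw [div_mul_eq_mul_div, le_div_iff₀ (by positivity)]
  refine le_of_mul_le_mul_left ?_ hr₂
  linarith [mul_nonneg (mul_nonneg (add_pos hr₁ hr₂).le hr₁.le) hΔ₂]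

/-- Assuming the form is negative semidefinite on `N = {D : (D·f) = (D·H) = 0}`:
for `vᵢ = (rᵢ, ξᵢ, aᵢ)` with `rᵢ > 0`, `(ξ₁·f)·r₂ = (ξ₂·f)·r₁` and the
Bogomolov bounds `⟨vᵢ,vᵢ⟩ ≥ −rᵢ²χ`, setting `v := v₁ + v₂`, `r := r₁ + r₂`,
one has `0 ≤ ⟨v₁,v₁⟩ + r₁²χ ≤ (r₁/r)·(⟨v,v⟩ + r²χ)`. -/
theorem stmt3 {V : Type*} [AddCommGroup V] [Module ℚ V] [FiniteDimensional ℚ V]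
    (B : V →ₗ[ℚ] V →ₗ[ℚ] ℚ) (hB : ∀ x y : V, B x y = B y x)
    (H f : V) (hHH : B H H = 0) (hff : B f f = 0) (hHf : B H f = 1)
    (hNneg : ∀ D : V, B D f = 0 → B D H = 0 → B D D ≤ 0)
    (χ r₁ r₂ a₁ a₂ : ℚ) (ξ₁ ξ₂ : V)
    (hr₁ : 0 < r₁) (hr₂ : 0 < r₂)
    (hd : B ξ₁ f * r₂ = B ξ₂ f * r₁)
    (hBog₁ : B ξ₁ ξ₁ - 2 * r₁ * a₁ ≥ -(r₁ ^ 2 * χ))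
    (hBog₂ : B ξ₂ ξ₂ - 2 * r₂ * a₂ ≥ -(r₂ ^ 2 * χ)) :
    0 ≤ (B ξ₁ ξ₁ - 2 * r₁ * a₁) + r₁ ^ 2 * χ ∧
    (B ξ₁ ξ₁ - 2 * r₁ * a₁) + r₁ ^ 2 * χ
      ≤ (r₁ / (r₁ + r₂)) *
          ((B (ξ₁ + ξ₂) (ξ₁ + ξ₂) - 2 * (r₁ + r₂) * (a₁ + a₂)) + (r₁ + r₂) ^ 2 * χ) :=
  stmt3_general B hB H f hff hHf hNneg χ r₁ r₂ a₁ a₂ ξ₁ ξ₂ hr₁ hr₂ hd hBog₁ hBog₂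
end

section
/- Let χ ∈ ℚ, μ > 0 rational, let v = (r, dH + kf + D, a) with r > 0 and D ∈ N, and let v₁ = (0, k₁f + D₁, a₁) with D₁ ∈ N. Assume μk₁ ≥ 1, (D − D₁, D − D₁) ≤ 0, ⟨v − v₁, v − v₁⟩ ≥ −r²χ, and −(D,D) + ⟨v,v⟩ + r²χ ≥ 0. Then a₁/k₁ ≥ d/r − μ(−(D,D) + ⟨v,v⟩ + r²χ)/(2r). (This is the rank-zero case of the paper's Lemma locating the Gieseker chamber; since r ≥ 1 for Mukai vectors of sheaves, it yields the paper's bound a₁/k₁ ≥ d/r − μ(−(D,D) + ⟨v,v⟩ + r²χ)/2.) -/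
/-!
Writing `ξ = dH + kf + D`, the hyperbolic plane spanned by `H, f` is orthogonal to `D`, so
`(ξ·ξ) = 2dk + (D·D)` and `Δ := -(D·D) + ⟨v,v⟩ + r²χ = 2dk - 2ra + r²χ`. The Bogomolov-type
hypothesis on `v - v₁` then reads `2ra₁ ≥ 2dk₁ - Δ - (D - D₁)² ≥ 2dk₁ - Δ`, and dividing by
`2rk₁ > 0` together with `1/k₁ ≤ μ` and `Δ ≥ 0` gives the bound.
-/

section HyperbolicPlane

variable {R V : Type*} [CommRing R] [AddCommGroup V] [Module R V] (B : V →ₗ[R] V →ₗ[R] R)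

theorem LinearMap.apply_smul_add_smul_add_self (hB : ∀ x y : V, B x y = B y x) {H f D : V}
    (hHH : B H H = 0) (hff : B f f = 0) (hHf : B H f = 1) (hDf : B D f = 0) (hDH : B D H = 0)
    (d k : R) : B (d • H + k • f + D) (d • H + k • f + D) = 2 * d * k + B D D := by
  have hfH : B f H = 1 := hB f H ▸ hHf
  have hHD : B H D = 0 := hB H D ▸ hDH
  have hfD : B f D = 0 := hB f D ▸ hDf
  simp only [map_add, map_smul, LinearMap.add_apply, LinearMap.smul_apply, smul_eq_mul,
    hHH, hff, hHf, hfH, hDf, hDH, hfD, hHD]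
  ring

end HyperbolicPlane

theorem div_ge_sub_of_bogomolov {K : Type*} [Field K] [LinearOrder K] [IsStrictOrderedRing K]
    {μ r d k₁ a₁ Δ X : K} (hμ : 0 < μ) (hr : 0 < r)
    (hμk₁ : μ * k₁ ≥ 1) (hX : X ≤ 0) (hΔ : Δ ≥ 0) (hBog : Δ - 2 * d * k₁ + X + 2 * r * a₁ ≥ 0) :
    a₁ / k₁ ≥ d / r - μ * Δ / (2 * r) := by
  have hk₁ : 0 < k₁ := pos_of_mul_pos_right (by linarith) hμ.le
  have ha₁ : d * k₁ - Δ / 2 ≤ r * a₁ := by linarith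
  have hinv : k₁⁻¹ ≤ μ := (inv_le_iff_one_le_mul₀ hk₁).mpr hμk₁
  calc d / r - μ * Δ / (2 * r) ≤ d / r - k₁⁻¹ * Δ / (2 * r) := by
        gcongr
    _ = (d * k₁ - Δ / 2) / r / k₁ := by field_simp
    _ ≤ a₁ / k₁ := by
        gcongr
        rwa [div_le_iff₀' hr]

theorem stmt5_general {V : Type*} [AddCommGroup V] [Module ℚ V]
    (B : V →ₗ[ℚ] V →ₗ[ℚ] ℚ) (hB : ∀ x y : V, B x y = B y x)
    (H f : V) (hHH : B H H = 0) (hff : B f f = 0) (hHf : B H f = 1)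
    (χ μ r d k a k₁ a₁ : ℚ) (D D₁ : V)
    (hDf : B D f = 0) (hDH : B D H = 0)
    (hD₁f : B D₁ f = 0) (hD₁H : B D₁ H = 0)
    (hμ : 0 < μ) (hr : 0 < r)
    (hμk₁ : μ * k₁ ≥ 1)
    (hDD₁ : B (D - D₁) (D - D₁) ≤ 0)
    (hBog : B (d • H + (k - k₁) • f + (D - D₁)) (d • H + (k - k₁) • f + (D - D₁))
        - 2 * r * (a - a₁) ≥ -(r ^ 2 * χ))
    (hpos : -(B D D) + (B (d • H + k • f + D) (d • H + k • f + D) - 2 * r * a)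
        + r ^ 2 * χ ≥ 0) :
    a₁ / k₁ ≥ d / r - μ * (-(B D D)
        + (B (d • H + k • f + D) (d • H + k • f + D) - 2 * r * a) + r ^ 2 * χ) / (2 * r) := by
  have hv := B.apply_smul_add_smul_add_self hB hHH hff hHf hDf hDH d k
  have hv₁ := B.apply_smul_add_smul_add_self hB hHH hff hHf (D := D - D₁)
    (by rw [map_sub, LinearMap.sub_apply, hDf, hD₁f, sub_zero])
    (by rw [map_sub, LinearMap.sub_apply, hDH, hD₁H, sub_zero]) d (k - k₁)
  rw [hv] at hpos ⊢
  rw [hv₁] at hBog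
  exact div_ge_sub_of_bogomolov hμ hr hμk₁ hDD₁ hpos (by linarith)

/-- Rank-zero case of the paper's Lemma locating the Gieseker chamber: with
`v = (r, dH + kf + D, a)`, `r > 0`, `D ∈ N`, and `v₁ = (0, k₁f + D₁, a₁)`,
`D₁ ∈ N`, assuming `μk₁ ≥ 1`, `(D − D₁, D − D₁) ≤ 0`,
`⟨v − v₁, v − v₁⟩ ≥ −r²χ` and `−(D,D) + ⟨v,v⟩ + r²χ ≥ 0`, one has
`a₁/k₁ ≥ d/r − μ(−(D,D) + ⟨v,v⟩ + r²χ)/(2r)`. -/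
theorem stmt5 {V : Type*} [AddCommGroup V] [Module ℚ V] [FiniteDimensional ℚ V]
    (B : V →ₗ[ℚ] V →ₗ[ℚ] ℚ) (hB : ∀ x y : V, B x y = B y x)
    (H f : V) (hHH : B H H = 0) (hff : B f f = 0) (hHf : B H f = 1)
    (χ μ r d k a k₁ a₁ : ℚ) (D D₁ : V)
    (hDf : B D f = 0) (hDH : B D H = 0)
    (hD₁f : B D₁ f = 0) (hD₁H : B D₁ H = 0)
    (hμ : 0 < μ) (hr : 0 < r)
    (hμk₁ : μ * k₁ ≥ 1)
    (hDD₁ : B (D - D₁) (D - D₁) ≤ 0)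
    (hBog : B (d • H + (k - k₁) • f + (D - D₁)) (d • H + (k - k₁) • f + (D - D₁))
        - 2 * r * (a - a₁) ≥ -(r ^ 2 * χ))
    (hpos : -(B D D) + (B (d • H + k • f + D) (d • H + k • f + D) - 2 * r * a)
        + r ^ 2 * χ ≥ 0) :
    a₁ / k₁ ≥ d / r - μ * (-(B D D)
        + (B (d • H + k • f + D) (d • H + k • f + D) - 2 * r * a) + r ^ 2 * χ) / (2 * r) :=
  stmt5_general B hB H f hHH hff hHf χ μ r d k a k₁ a₁ D D₁ hDf hDH hD₁f hD₁H hμ hr hμk₁ hDD₁ hBog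
    hpos
end

section
/- Fix a positive integer r, ξ ∈ Λ, a ∈ ℚ with m·a ∈ ℤ, and χ ∈ ℚ, and set v := (r, ξ, a). For a Mukai vector v₁ = (r₁, ξ₁, a₁) let D(v₁) := ξ₁ − (ξ₁·f)·H − (ξ₁·H)·f denote its component orthogonal to H and f. Then the set of triples (r₁, ⟨v₁,v₁⟩, D(v₁)), where v₁ = (r₁, ξ₁, a₁) ranges over Mukai vectors with 0 < r₁ < r, r·(ξ₁·f) = r₁·(ξ·f), ⟨v₁,v₁⟩ ≥ −r₁²χ and ⟨v − v₁, v − v₁⟩ ≥ −(r − r₁)²χ, is finite. (This is the lattice-theoretic form of the paper's Lemma that only finitely many pairs (⟨v₁²⟩, D(v₁)) occur for subsheaves E₁ of sheaves E with v(E) = v satisfying the Bogomolov inequalities; the Bogomolov bounds ⟨v_i²⟩ ≥ −r_i²χ(O_X) are taken as hypotheses.) -/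
/-!
Write `s = r - r₁` and `w = (ξ·f)(ξ·H)/r - a`. The fibre condition `r(ξ₁·f) = r₁(ξ·f)` gives
`s⟨v₁²⟩ + r₁⟨(v - v₁)²⟩ = s·D(ξ₁)² + r₁·D(ξ - ξ₁)² + 2r₁s·w`, and `D(·)² ≤ 0` since `D` lands in
the negative definite part `N`. With the Bogomolov inequalities this bounds `⟨v₁²⟩` from both sides
and `-D(ξ₁)²` from above, for each of the finitely many ranks `r₁`. Finally `⟨v₁²⟩ ∈ (1/m)ℤ`, and
if `pH, qf ∈ Λ` then `D(ξ₁) ∈ (1/pq)Λ`, a discrete set on which a bound on `-D²` bounds the norm.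
-/

open Bornology

section PositiveDefinite

variable {E : Type*} [NormedAddCommGroup E] [NormedSpace ℝ E] [FiniteDimensional ℝ E]

theorem LinearMap.continuous_apply_self (Q : E →ₗ[ℝ] E →ₗ[ℝ] ℝ) : Continuous fun x => Q x x :=
  (LinearMap.toContinuousLinearMap.toLinearMap ∘ₗ Q).continuous_of_finiteDimensional.clm_apply
    continuous_id

theorem LinearMap.exists_pos_mul_norm_sq_le (Q : E →ₗ[ℝ] E →ₗ[ℝ] ℝ) (S : Submodule ℝ E)
    (hQ : ∀ x ∈ S, x ≠ 0 → 0 < Q x x) : ∃ c > 0, ∀ x ∈ S, c * ‖x‖ ^ 2 ≤ Q x x := by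
  set K := Metric.sphere (0 : E) 1 ∩ S
  have hnormalize : ∀ x ∈ S, x ≠ 0 → ‖x‖⁻¹ • x ∈ K := fun x hx hx0 =>
    ⟨by simp [norm_smul, hx0], S.smul_mem _ hx⟩
  rcases K.eq_empty_or_nonempty with hK | hK
  · refine ⟨1, one_pos, fun x hx => ?_⟩
    obtain rfl : x = 0 := by_contra fun hx0 => (hK ▸ hnormalize x hx hx0 : _ ∈ (∅ : Set E))
    simp
  have hKc : IsCompact K := (isCompact_sphere 0 1).inter_right S.closed_of_finiteDimensional
  obtain ⟨x₀, ⟨hx₀, hx₀S⟩, hmin⟩ := hKc.exists_isMinOn hK Q.continuous_apply_self.continuousOn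
  refine ⟨Q x₀ x₀, hQ x₀ hx₀S (ne_zero_of_mem_unit_sphere ⟨x₀, hx₀⟩), fun x hx => ?_⟩
  rcases eq_or_ne x 0 with rfl | hx0
  · simp
  have hle : Q x₀ x₀ ≤ ‖x‖⁻¹ * (‖x‖⁻¹ * Q x x) := by
    simpa using hmin (hnormalize x hx hx0)
  have hpos : 0 < ‖x‖ := norm_pos_iff.2 hx0
  calc Q x₀ x₀ * ‖x‖ ^ 2 ≤ ‖x‖⁻¹ * (‖x‖⁻¹ * Q x x) * ‖x‖ ^ 2 := by gcongr
    _ = Q x x := by field_simp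

theorem LinearMap.isBounded_setOf_apply_self_le (Q : E →ₗ[ℝ] E →ₗ[ℝ] ℝ) (S : Submodule ℝ E)
    (hQ : ∀ x ∈ S, x ≠ 0 → 0 < Q x x) (C : ℝ) : IsBounded {x | x ∈ S ∧ Q x x ≤ C} := by
  obtain ⟨c, hc, hcQ⟩ := Q.exists_pos_mul_norm_sq_le S hQ
  refine (Metric.isBounded_closedBall (x := 0) (r := √(C / c))).subset fun x ⟨hxS, hxC⟩ => ?_
  rw [mem_closedBall_zero_iff, ← abs_norm]
  exact Real.abs_le_sqrt ((le_div_iff₀' hc).2 ((hcQ x hxS).trans hxC))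

end PositiveDefinite

theorem AddSubgroup.finite_setOf_zsmul_mem {E : Type*} [NormedAddCommGroup E] [NormedSpace ℝ E]
    [ProperSpace E] (L : AddSubgroup E) [DiscreteTopology L] {k : ℤ} (hk : k ≠ 0) {s : Set E}
    (hs : IsBounded s) : {x | k • x ∈ L ∧ x ∈ s}.Finite := by
  have hks : IsBounded ((k • ·) '' s) := by
    simpa only [← Int.cast_smul_eq_zsmul ℝ, Set.image_smul] using hs.smul₀ (k : ℝ)
  have hinj : Function.Injective (k • · : E → E) := fun x y hxy =>
    smul_right_injective E (Int.cast_ne_zero.2 hk : (k : ℝ) ≠ 0) <| by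
      simpa only [Int.cast_smul_eq_zsmul] using hxy
  refine Set.Finite.of_finite_image ?_ hinj.injOn
  refine (Metric.finite_isBounded_inter_isClosed DiscreteTopology.isDiscrete hks
    L.isClosed_of_discrete).subset ?_
  rintro _ ⟨x, ⟨hxL, hxs⟩, rfl⟩
  exact ⟨⟨x, hxs, rfl⟩, hxL⟩

theorem sub_le_of_weighted_sum_eq {s t q₁ q₂ y₁ y₂ w χ : ℝ} (hs : 0 < s) (ht : 0 ≤ t)
    (h : s * q₁ + t * q₂ = s * y₁ + t * y₂ + 2 * t * s * w) (hy₂ : y₂ ≤ 0)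
    (hq₂ : -(s ^ 2 * χ) ≤ q₂) : q₁ - y₁ ≤ t * (2 * w + s * χ) := by
  have hkey : s * (q₁ - y₁ - t * (2 * w + s * χ)) = t * (y₂ - (q₂ + s ^ 2 * χ)) := by
    linear_combination h
  have hneg : s * (q₁ - y₁ - t * (2 * w + s * χ)) ≤ 0 :=
    hkey ▸ mul_nonpos_of_nonneg_of_nonpos ht (by linarith)
  linarith [nonpos_of_mul_nonpos_right hneg hs]

section HyperbolicPlane

variable {V : Type*} [AddCommGroup V] [Module ℝ V] (B : V →ₗ[ℝ] V →ₗ[ℝ] ℝ) (H f : V)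

/-- The map `D` of the statement: projection onto the orthogonal complement of the hyperbolic
plane spanned by `H` and `f`. -/
def orthProj : V →ₗ[ℝ] V := LinearMap.id - (B.flip f).smulRight H - (B.flip H).smulRight f

theorem orthProj_apply (x : V) : orthProj B H f x = x - B x f • H - B x H • f := rfl

def mukaiSq (r : ℝ) (ξ : V) (a : ℝ) : ℝ := B ξ ξ - 2 * r * a

variable {B H f}

theorem apply_orthProj_f (hff : B f f = 0) (hHf : B H f = 1) (x : V) :
    B (orthProj B H f x) f = 0 := by
  simp [orthProj_apply, hff, hHf]

theorem apply_orthProj_H (hHH : B H H = 0) (hfH : B f H = 1) (x : V) :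
    B (orthProj B H f x) H = 0 := by
  simp [orthProj_apply, hHH, hfH]

theorem apply_orthProj_orthProj (hB : ∀ x y, B x y = B y x) (hHH : B H H = 0) (hff : B f f = 0)
    (hHf : B H f = 1) (x : V) :
    B (orthProj B H f x) (orthProj B H f x) = B x x - 2 * B x f * B x H := by
  have hfH : B f H = 1 := hB f H ▸ hHf
  have hright : ∀ y, B y (orthProj B H f x) = B y x - B x f * B y H - B x H * B y f := by
    simp [orthProj_apply]
  rw [hright, apply_orthProj_f hff hHf, apply_orthProj_H hHH hfH]
  simp only [orthProj_apply, map_sub, map_smul, LinearMap.sub_apply, LinearMap.smul_apply,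
    smul_eq_mul, hB H x, hB f x, mul_zero, sub_zero]
  ring

theorem mukaiSq_split (hB : ∀ x y, B x y = B y x) (hHH : B H H = 0) (hff : B f f = 0)
    (hHf : B H f = 1) {r t a a₁ : ℝ} {ξ ξ₁ : V} (hr : r ≠ 0) (hfiber : r * B ξ₁ f = t * B ξ f) :
    (r - t) * mukaiSq B t ξ₁ a₁ + t * mukaiSq B (r - t) (ξ - ξ₁) (a - a₁) =
      (r - t) * B (orthProj B H f ξ₁) (orthProj B H f ξ₁) +
        t * B (orthProj B H f (ξ - ξ₁)) (orthProj B H f (ξ - ξ₁)) +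
        2 * t * (r - t) * (B ξ f * B ξ H / r - a) := by
  have hξ₁f : B ξ₁ f = t * B ξ f / r := by rw [eq_div_iff hr]; linarith
  rw [apply_orthProj_orthProj hB hHH hff hHf, apply_orthProj_orthProj hB hHH hff hHf]
  simp only [mukaiSq, map_sub, LinearMap.sub_apply, hξ₁f]
  field_simp
  ring

theorem bounds_of_bogomolov (hB : ∀ x y, B x y = B y x) (hHH : B H H = 0) (hff : B f f = 0)
    (hHf : B H f = 1) (hnonpos : ∀ x, B x f = 0 → B x H = 0 → B x x ≤ 0)
    {r t a a₁ χ : ℝ} {ξ ξ₁ : V} (ht : 0 < t) (htr : t < r) (hfiber : r * B ξ₁ f = t * B ξ f)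
    (hq₁ : -(t ^ 2 * χ) ≤ mukaiSq B t ξ₁ a₁)
    (hq₂ : -((r - t) ^ 2 * χ) ≤ mukaiSq B (r - t) (ξ - ξ₁) (a - a₁)) :
    mukaiSq B t ξ₁ a₁ ≤ t * (2 * (B ξ f * B ξ H / r - a) + (r - t) * χ) ∧
      -B (orthProj B H f ξ₁) (orthProj B H f ξ₁) ≤
        t ^ 2 * χ + t * (2 * (B ξ f * B ξ H / r - a) + (r - t) * χ) := by
  have hfH : B f H = 1 := hB f H ▸ hHf
  have hnonpos_orthProj : ∀ x, B (orthProj B H f x) (orthProj B H f x) ≤ 0 := fun x =>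
    hnonpos _ (apply_orthProj_f hff hHf x) (apply_orthProj_H hHH hfH x)
  have hsplit := mukaiSq_split hB hHH hff hHf (a := a) (a₁ := a₁) (by linarith) hfiber
  have hdiff := sub_le_of_weighted_sum_eq (sub_pos.2 htr) ht.le hsplit
    (hnonpos_orthProj (ξ - ξ₁)) hq₂
  constructor <;> linarith [hnonpos_orthProj ξ₁]

theorem zsmul_orthProj_mem (Λ : Submodule ℤ V) (hBint : ∀ x ∈ Λ, ∀ y ∈ Λ, ∃ z : ℤ, B x y = z)
    {p q : ℤ} (hp : p ≠ 0) (hq : q ≠ 0) (hpH : p • H ∈ Λ) (hqf : q • f ∈ Λ) {x : V}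
    (hx : x ∈ Λ) : (p * q) • orthProj B H f x ∈ Λ := by
  obtain ⟨z₁, hz₁⟩ := hBint x hx (q • f) hqf
  obtain ⟨z₂, hz₂⟩ := hBint x hx (p • H) hpH
  have hxf : B x f = z₁ / q := by
    rw [eq_div_iff (Int.cast_ne_zero.2 hq), ← hz₁, map_zsmul, zsmul_eq_mul, mul_comm]
  have hxH : B x H = z₂ / p := by
    rw [eq_div_iff (Int.cast_ne_zero.2 hp), ← hz₂, map_zsmul, zsmul_eq_mul, mul_comm]
  have hexpand : (p * q) • orthProj B H f x = (p * q) • x - z₁ • (p • H) - z₂ • (q • f) := by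
    simp only [orthProj_apply, hxf, hxH, ← Int.cast_smul_eq_zsmul ℝ, smul_sub, smul_smul]
    push_cast
    match_scalars <;> field_simp
  rw [hexpand]
  exact sub_mem (sub_mem (Λ.smul_mem _ hx) (Λ.smul_mem _ hpH)) (Λ.smul_mem _ hqf)

end HyperbolicPlane

theorem stmt8_general {V : Type*} [NormedAddCommGroup V] [NormedSpace ℝ V] [FiniteDimensional ℝ V]
    (B : V →ₗ[ℝ] V →ₗ[ℝ] ℝ) (hBsymm : ∀ x y : V, B x y = B y x)
    (n : ℕ) (b : Module.Basis (Fin n) ℝ V) (Λ : Submodule ℤ V)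
    (hΛ : Λ = Submodule.span ℤ (Set.range ⇑b))
    (hBint : ∀ x ∈ Λ, ∀ y ∈ Λ, ∃ z : ℤ, B x y = (z : ℝ))
    (H f : V)
    (hHH : B H H = 0) (hff : B f f = 0) (hHf : B H f = 1)
    (hHrat : ∃ q : ℤ, q ≠ 0 ∧ q • H ∈ Λ) (hfrat : ∃ q : ℤ, q ≠ 0 ∧ q • f ∈ Λ)
    (hneg : ∀ x : V, B x f = 0 → B x H = 0 → x ≠ 0 → B x x < 0)
    (m : ℕ) (hm : 0 < m)
    (r : ℤ) (ξ : V) (a χ : ℚ) :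
    {t : ℤ × ℝ × V | ∃ ξ₁ ∈ Λ, ∃ a₁ : ℚ, (∃ z : ℤ, (m : ℚ) * a₁ = (z : ℚ)) ∧
      0 < t.1 ∧ t.1 < r ∧
      (r : ℝ) * B ξ₁ f = (t.1 : ℝ) * B ξ f ∧
      t.2.1 = B ξ₁ ξ₁ - 2 * (t.1 : ℝ) * (a₁ : ℝ) ∧
      -((t.1 : ℝ) ^ 2 * (χ : ℝ)) ≤ t.2.1 ∧
      -(((r - t.1 : ℤ) : ℝ) ^ 2 * (χ : ℝ))
        ≤ B (ξ - ξ₁) (ξ - ξ₁) - 2 * ((r - t.1 : ℤ) : ℝ) * ((a : ℝ) - (a₁ : ℝ)) ∧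
      t.2.2 = ξ₁ - B ξ₁ f • H - B ξ₁ H • f}.Finite := by
  subst hΛ
  obtain ⟨p, hp, hpH⟩ := hHrat
  obtain ⟨q, hq, hqf⟩ := hfrat
  have hnonpos : ∀ x, B x f = 0 → B x H = 0 → B x x ≤ 0 := fun x hxf hxH =>
    (eq_or_ne x 0).elim (fun hx => by simp [hx]) fun hx => (hneg x hxf hxH hx).le
  have hposN : ∀ x ∈ LinearMap.ker (B.flip f) ⊓ LinearMap.ker (B.flip H), x ≠ 0 → 0 < (-B) x x :=
    fun x hx hx0 => neg_pos.2 (hneg x hx.1 hx.2 hx0)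
  set bound : ℤ → ℝ := fun t => t * (2 * (B ξ f * B ξ H / r - a) + (r - t) * χ)
  refine ((Set.finite_Icc 0 r).biUnion fun t _ => (Set.finite_singleton t).prod <|
    ((AddSubgroup.zmultiples (1 : ℝ)).finite_setOf_zsmul_mem (Int.natCast_ne_zero.2 hm.ne')
      (Metric.isBounded_Icc (-((t : ℝ) ^ 2 * χ)) (bound t))).prod
    ((Submodule.span ℤ (Set.range b)).toAddSubgroup.finite_setOf_zsmul_mem (mul_ne_zero hp hq)
      ((-B).isBounded_setOf_apply_self_le _ hposN ((t : ℝ) ^ 2 * χ + bound t)))).subset ?_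
  rintro ⟨t, q₁, y⟩ ⟨ξ₁, hξ₁, a₁, ⟨z, hz⟩, ht, htr, hfiber, hq₁def, hq₁, hq₂, hy⟩
  dsimp only at ht htr hfiber hq₁def hq₁ hq₂ hy
  subst hq₁def hy
  obtain ⟨hup, hlow⟩ := bounds_of_bogomolov hBsymm hHH hff hHf hnonpos
    (Int.cast_pos.2 ht) (Int.cast_lt.2 htr) hfiber hq₁ (by push_cast at hq₂; exact hq₂)
  obtain ⟨zB, hzB⟩ := hBint ξ₁ hξ₁ ξ₁ hξ₁
  simp only [Set.mem_iUnion]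
  refine ⟨t, ⟨ht.le, htr.le⟩, rfl, ⟨⟨m * zB - 2 * t * z, ?_⟩, hq₁, hup⟩,
    zsmul_orthProj_mem _ hBint hp hq hpH hqf hξ₁, ?_, hlow⟩
  · have hma₁ : (m : ℝ) * a₁ = z := by exact_mod_cast hz
    simp only [zsmul_eq_mul, mul_one, hzB]
    push_cast
    linear_combination (2 * t : ℝ) * hma₁
  · exact ⟨apply_orthProj_f hff hHf ξ₁, apply_orthProj_H hHH (hBsymm f H ▸ hHf) ξ₁⟩

/-- Lattice-theoretic form of the paper's Lemma: only finitely many triples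
`(r₁, ⟨v₁,v₁⟩, D(v₁))` occur among Mukai vectors `v₁ = (r₁, ξ₁, a₁)` with
`0 < r₁ < r`, `r(ξ₁·f) = r₁(ξ·f)`, `⟨v₁,v₁⟩ ≥ −r₁²χ` and
`⟨v − v₁, v − v₁⟩ ≥ −(r − r₁)²χ`, where
`D(v₁) = ξ₁ − (ξ₁·f)H − (ξ₁·H)f` is the component orthogonal to `H` and `f`. -/
theorem stmt8 {V : Type*} [NormedAddCommGroup V] [NormedSpace ℝ V] [FiniteDimensional ℝ V]
    (B : V →ₗ[ℝ] V →ₗ[ℝ] ℝ) (hBsymm : ∀ x y : V, B x y = B y x)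
    (n : ℕ) (b : Module.Basis (Fin n) ℝ V) (Λ : Submodule ℤ V)
    (hΛ : Λ = Submodule.span ℤ (Set.range ⇑b))
    (hBint : ∀ x ∈ Λ, ∀ y ∈ Λ, ∃ z : ℤ, B x y = (z : ℝ))
    (H f : V)
    (hHH : B H H = 0) (hff : B f f = 0) (hHf : B H f = 1)
    (hHrat : ∃ q : ℤ, q ≠ 0 ∧ q • H ∈ Λ) (hfrat : ∃ q : ℤ, q ≠ 0 ∧ q • f ∈ Λ)
    (hneg : ∀ x : V, B x f = 0 → B x H = 0 → x ≠ 0 → B x x < 0)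
    (m : ℕ) (hm : 0 < m)
    (r : ℤ) (hr : 0 < r) (ξ : V) (hξ : ξ ∈ Λ) (a χ : ℚ)
    (ha : ∃ z : ℤ, (m : ℚ) * a = (z : ℚ)) :
    {t : ℤ × ℝ × V | ∃ ξ₁ ∈ Λ, ∃ a₁ : ℚ, (∃ z : ℤ, (m : ℚ) * a₁ = (z : ℚ)) ∧
      0 < t.1 ∧ t.1 < r ∧
      (r : ℝ) * B ξ₁ f = (t.1 : ℝ) * B ξ f ∧
      t.2.1 = B ξ₁ ξ₁ - 2 * (t.1 : ℝ) * (a₁ : ℝ) ∧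
      -((t.1 : ℝ) ^ 2 * (χ : ℝ)) ≤ t.2.1 ∧
      -(((r - t.1 : ℤ) : ℝ) ^ 2 * (χ : ℝ))
        ≤ B (ξ - ξ₁) (ξ - ξ₁) - 2 * ((r - t.1 : ℤ) : ℝ) * ((a : ℝ) - (a₁ : ℝ)) ∧
      t.2.2 = ξ₁ - B ξ₁ f • H - B ξ₁ H • f}.Finite :=
  stmt8_general B hBsymm n b Λ hΛ hBint H f hHH hff hHf hHrat hfrat hneg m hm r ξ a χ
end

section
/- Fix a positive integer r, ξ ∈ Λ, a ∈ ℚ with m·a ∈ ℤ, and χ ∈ ℚ; set v := (r, ξ, a) and d := (ξ·f). Let B be a compact subset of {(s, α) ∈ ℝ × N_ℝ : rs ≠ d}. Then there are only finitely many Mukai vectors v₁ = (r₁, ξ₁, a₁) such that: 0 < r₁ < r; r·(ξ₁·f) = r₁·(ξ·f); ⟨v₁,v₁⟩ ≥ −r₁²χ; ⟨v − v₁, v − v₁⟩ ≥ −(r − r₁)²χ; and the wall W_{v₁} of v₁ meets B, i.e. (sH + α, r·ξ₁ − r₁·ξ) = r·a₁ − r₁·a for some (s, α) ∈ B. (This is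 the positive-rank part of the paper's Lemma that only finitely many walls, defined by ⟨e^{sH+α}, r·v₁ − r₁·v⟩ = 0, meet a compact subset of the parameter space 𝒢(v).) -/
/-!
Write `ξ₁ = x • H + y • f + ν₁` with `ν₁` orthogonal to `H` and `f`; the slope condition fixes
`x = r₁ d / r`. Adding `r - r₁` times the first Bogomolov inequality to `r₁` times the second
eliminates `y` and `a₁` and bounds `B ν₁ ν₁` from below, hence `‖ν₁‖` by negative definiteness.
Each Bogomolov inequality alone bounds the linear form `d y - r a₁` from one side, while the wall
through `(s, α)` bounds `r a₁ - r s y`. As `d - r s` stays away from `0` on the compact set, the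
two forms are uniformly independent, so `y` and `a₁` are bounded; integrality turns boundedness
into finiteness.
-/

open Metric Set

section HyperbolicPair

variable {R V : Type*} [CommRing R] [AddCommGroup V] [Module R V]

structure IsHyperbolicPair (B : V →ₗ[R] V →ₗ[R] R) (H f : V) : Prop where
  symm : ∀ x y, B x y = B y x
  apply_H_H : B H H = 0
  apply_f_f : B f f = 0
  apply_H_f : B H f = 1

/-- The projection onto `N = {x | B x f = 0 ∧ B x H = 0}` along the plane spanned by `H` and `f`
(when `H, f` form a hyperbolic pair). -/
def perpPart (B : V →ₗ[R] V →ₗ[R] R) (H f : V) : V →ₗ[R] V :=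
  LinearMap.id - (B.flip f).smulRight H - (B.flip H).smulRight f

variable {B : V →ₗ[R] V →ₗ[R] R} {H f : V}

theorem perpPart_apply (v : V) : perpPart B H f v = v - B v f • H - B v H • f := rfl

theorem add_perpPart (v : V) : B v f • H + B v H • f + perpPart B H f v = v := by
  rw [perpPart_apply]
  abel

namespace IsHyperbolicPair

theorem apply_perpPart_f (hp : IsHyperbolicPair B H f) (v : V) :
    B (perpPart B H f v) f = 0 := by
  simp [perpPart_apply, hp.apply_H_f, hp.apply_f_f]

theorem apply_perpPart_H (hp : IsHyperbolicPair B H f) (v : V) :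
    B (perpPart B H f v) H = 0 := by
  simp [perpPart_apply, hp.apply_H_H, hp.symm f H, hp.apply_H_f]

theorem apply_self_eq (hp : IsHyperbolicPair B H f) (v : V) :
    B v v = 2 * B v f * B v H + B (perpPart B H f v) (perpPart B H f v) := by
  simp only [perpPart_apply, map_sub, map_smul, LinearMap.sub_apply, LinearMap.smul_apply,
    smul_eq_mul, hp.apply_H_H, hp.apply_f_f, hp.apply_H_f, hp.symm f H, hp.symm H v, hp.symm f v]
  ring

theorem apply_smul_add_eq (hp : IsHyperbolicPair B H f) {α : V} (hαf : B α f = 0)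
    (hαH : B α H = 0) (s : R) (v : V) :
    B (s • H + α) v = s * B v H + B α (perpPart B H f v) := by
  simp [perpPart_apply, hαf, hαH, hp.symm H v]

end IsHyperbolicPair

end HyperbolicPair

section Bogomolov

variable {𝕜 : Type*} [Field 𝕜] [LinearOrder 𝕜] [IsStrictOrderedRing 𝕜]

section Scalar

variable {r r₁ d e x y a a₁ χ Q₁ Q₂ : 𝕜}

theorem neg_abs_le_of_bogomolov (h0 : 0 < r₁) (hlt : r₁ < r) (hx : r * x = r₁ * d)
    (hQ₂ : Q₂ ≤ 0) (h₁ : -(r₁ ^ 2 * χ) ≤ 2 * x * y + Q₁ - 2 * r₁ * a₁)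
    (h₂ : -((r - r₁) ^ 2 * χ) ≤ 2 * (d - x) * (e - y) + Q₂ - 2 * (r - r₁) * (a - a₁)) :
    -|2 * r * a - r ^ 2 * χ - 2 * d * e| ≤ Q₁ := by
  set K := 2 * r * a - r ^ 2 * χ - 2 * d * e
  have hr : 0 < r := h0.trans hlt
  have hsum : (r * Q₁ - r₁ * K) * (r - r₁) =
      r * (r - r₁) * (2 * x * y + Q₁ - 2 * r₁ * a₁ + r₁ ^ 2 * χ)
        + r * r₁ * (2 * (d - x) * (e - y) + Q₂ - 2 * (r - r₁) * (a - a₁) + (r - r₁) ^ 2 * χ)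
        - r * r₁ * Q₂ := by
    linear_combination (-(2 * r * y - 2 * r₁ * e)) * hx
  have hkey : r₁ * K ≤ r * Q₁ := by
    refine sub_nonneg.1 (nonneg_of_mul_nonneg_left ?_ (sub_pos.2 hlt))
    rw [hsum]
    have := mul_nonpos_of_nonneg_of_nonpos (mul_nonneg hr.le h0.le) hQ₂
    have := mul_nonneg (mul_nonneg hr.le (sub_pos.2 hlt).le) (neg_le_iff_add_nonneg.1 h₁)
    have := mul_nonneg (mul_nonneg hr.le h0.le) (neg_le_iff_add_nonneg.1 h₂)
    linarith
  nlinarith [neg_abs_le K, abs_nonneg K]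

theorem abs_sub_le_of_bogomolov (h0 : 0 < r₁) (hlt : r₁ < r) (hx : r * x = r₁ * d)
    (hQ₁ : Q₁ ≤ 0) (hQ₂ : Q₂ ≤ 0) (h₁ : -(r₁ ^ 2 * χ) ≤ 2 * x * y + Q₁ - 2 * r₁ * a₁)
    (h₂ : -((r - r₁) ^ 2 * χ) ≤ 2 * (d - x) * (e - y) + Q₂ - 2 * (r - r₁) * (a - a₁)) :
    |d * y - r * a₁| ≤ |d * e - r * a| + r ^ 2 * |χ| := by
  have hr : 0 < r := h0.trans hlt
  have hlow : 0 ≤ 2 * (d * y - r * a₁) + r * r₁ * χ := by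
    refine nonneg_of_mul_nonneg_right (?_ : 0 ≤ r₁ * _) h0
    have hid : r₁ * (2 * (d * y - r * a₁) + r * r₁ * χ)
        = r * (2 * x * y + Q₁ - 2 * r₁ * a₁ + r₁ ^ 2 * χ) - r * Q₁ := by
      linear_combination (-2 * y) * hx
    rw [hid]
    nlinarith [mul_nonneg hr.le (neg_le_iff_add_nonneg.1 h₁)]
  have hup : 0 ≤ 2 * (d * e - r * a) + r * (r - r₁) * χ - 2 * (d * y - r * a₁) := by
    refine nonneg_of_mul_nonneg_right (?_ : 0 ≤ (r - r₁) * _) (sub_pos.2 hlt)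
    have hid : (r - r₁) * (2 * (d * e - r * a) + r * (r - r₁) * χ - 2 * (d * y - r * a₁))
        = r * (2 * (d - x) * (e - y) + Q₂ - 2 * (r - r₁) * (a - a₁) + (r - r₁) ^ 2 * χ)
          - r * Q₂ := by
      linear_combination (2 * (e - y)) * hx
    rw [hid]
    nlinarith [mul_nonneg hr.le (neg_le_iff_add_nonneg.1 h₂)]
  have hχ₁ : r * r₁ * χ ≤ r ^ 2 * |χ| := by
    nlinarith [mul_le_mul_of_nonneg_left (le_abs_self χ) (mul_pos hr h0).le,
      mul_le_mul_of_nonneg_right hlt.le (mul_nonneg hr.le (abs_nonneg χ))]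
  have hχ₂ : r * (r - r₁) * χ ≤ r ^ 2 * |χ| := by
    nlinarith [mul_le_mul_of_nonneg_left (le_abs_self χ) (mul_pos hr (sub_pos.2 hlt)).le,
      mul_nonneg (mul_nonneg hr.le h0.le) (abs_nonneg χ)]
  rw [abs_le]
  constructor <;> linarith [abs_nonneg χ, neg_abs_le (d * e - r * a),
    le_abs_self (d * e - r * a), mul_nonneg (sq_nonneg r) (abs_nonneg χ)]

theorem abs_le_div_of_abs_sub_le {C κ : 𝕜} (hr : 0 < r) (h : |d * y - r * a₁| ≤ κ)
    (hy : |y| ≤ C) : |a₁| ≤ (κ + |d| * C) / r := by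
  rw [le_div_iff₀ hr]
  calc |a₁| * r = |d * y - (d * y - r * a₁)| := by
        rw [sub_sub_cancel, abs_mul, abs_of_pos hr, mul_comm]
    _ ≤ |d * y| + |d * y - r * a₁| := abs_sub _ _
    _ ≤ |d| * C + κ := by rw [abs_mul]; gcongr
    _ = κ + |d| * C := add_comm _ _

end Scalar

variable {V : Type*} [AddCommGroup V] [Module 𝕜 V]

/-- The conditions on `v₁ = (r₁, ξ₁, a₁)` relative to `v = (r, ξ, a)`; here `B ξ ξ - 2 * r * a`
is the Mukai square `⟨v, v⟩`. -/
structure IsBogomolovSplitting (B : V →ₗ[𝕜] V →ₗ[𝕜] 𝕜) (f : V) (χ r : 𝕜) (ξ : V) (a r₁ : 𝕜)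
    (ξ₁ : V) (a₁ : 𝕜) : Prop where
  pos : 0 < r₁
  lt : r₁ < r
  slope : r * B ξ₁ f = r₁ * B ξ f
  bogomolov_left : -(r₁ ^ 2 * χ) ≤ B ξ₁ ξ₁ - 2 * r₁ * a₁
  bogomolov_right : -((r - r₁) ^ 2 * χ) ≤ B (ξ - ξ₁) (ξ - ξ₁) - 2 * (r - r₁) * (a - a₁)

namespace IsBogomolovSplitting

variable {B : V →ₗ[𝕜] V →ₗ[𝕜] 𝕜} {H f : V} {χ r a r₁ a₁ : 𝕜} {ξ ξ₁ : V}

theorem abs_apply_f_le (hs : IsBogomolovSplitting B f χ r ξ a r₁ ξ₁ a₁) :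
    |B ξ₁ f| ≤ |B ξ f| := by
  have hr : 0 < r := hs.pos.trans hs.lt
  have h := congrArg abs hs.slope
  rw [abs_mul, abs_mul, abs_of_pos hr, abs_of_pos hs.pos] at h
  nlinarith [abs_nonneg (B ξ f), hs.lt]

theorem neg_abs_le_apply_perpPart (hs : IsBogomolovSplitting B f χ r ξ a r₁ ξ₁ a₁)
    (hp : IsHyperbolicPair B H f) (hN : ∀ x, B x f = 0 → B x H = 0 → B x x ≤ 0) :
    -|2 * r * a - r ^ 2 * χ - 2 * B ξ f * B ξ H| ≤
      B (perpPart B H f ξ₁) (perpPart B H f ξ₁) := by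
  have h₁ := hs.bogomolov_left
  have h₂ := hs.bogomolov_right
  rw [hp.apply_self_eq] at h₁ h₂
  simp only [map_sub B ξ ξ₁, LinearMap.sub_apply] at h₂
  exact neg_abs_le_of_bogomolov hs.pos hs.lt hs.slope
    (hN _ (hp.apply_perpPart_f _) (hp.apply_perpPart_H _)) h₁ h₂

theorem abs_sub_le (hs : IsBogomolovSplitting B f χ r ξ a r₁ ξ₁ a₁)
    (hp : IsHyperbolicPair B H f) (hN : ∀ x, B x f = 0 → B x H = 0 → B x x ≤ 0) :
    |B ξ f * B ξ₁ H - r * a₁| ≤ |B ξ f * B ξ H - r * a| + r ^ 2 * |χ| := by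
  have h₁ := hs.bogomolov_left
  have h₂ := hs.bogomolov_right
  rw [hp.apply_self_eq] at h₁ h₂
  simp only [map_sub B ξ ξ₁, LinearMap.sub_apply] at h₂
  exact abs_sub_le_of_bogomolov hs.pos hs.lt hs.slope
    (hN _ (hp.apply_perpPart_f _) (hp.apply_perpPart_H _))
    (hN _ (hp.apply_perpPart_f _) (hp.apply_perpPart_H _)) h₁ h₂

end IsBogomolovSplitting

end Bogomolov

@[fun_prop]
theorem LinearMap.continuous_apply₂_of_finiteDimensional {X E F : Type*} [TopologicalSpace X]
    [NormedAddCommGroup E] [NormedSpace ℝ E] [FiniteDimensional ℝ E]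
    [NormedAddCommGroup F] [NormedSpace ℝ F] [FiniteDimensional ℝ F]
    (B : E →ₗ[ℝ] F →ₗ[ℝ] ℝ) {g : X → E} {h : X → F} (hg : Continuous g) (hh : Continuous h) :
    Continuous fun x => B (g x) (h x) :=
  B.toContinuousBilinearMap.continuous₂.comp (hg.prodMk hh)

theorem finite_setOf_abs_le_of_mul_eq_intCast {m : ℕ} (hm : 0 < m) (K : ℝ) :
    {q : ℚ | |(q : ℝ)| ≤ K ∧ ∃ z : ℤ, (m : ℚ) * q = z}.Finite := by
  refine (((isCompact_closedBall (0 : ℤ) (m * K)).finite_of_discrete).image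
    fun z : ℤ => (z : ℚ) / m).subset ?_
  rintro q ⟨hq, z, hz⟩
  refine ⟨z, ?_, by simp only [← hz]; field_simp⟩
  have hzq : (z : ℝ) = m * q := by exact_mod_cast hz.symm
  rw [mem_closedBall, Int.dist_eq, Int.cast_zero, sub_zero, hzq, abs_mul, Nat.abs_cast]
  exact mul_le_mul_of_nonneg_left hq (Nat.cast_nonneg m)

section Bounds

variable {V : Type*} [NormedAddCommGroup V] [NormedSpace ℝ V] [FiniteDimensional ℝ V]

theorem exists_pos_mul_sq_norm_le_neg_apply_self (B : V →ₗ[ℝ] V →ₗ[ℝ] ℝ) (N : Submodule ℝ V)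
    (hneg : ∀ x ∈ N, x ≠ 0 → B x x < 0) : ∃ c > 0, ∀ x ∈ N, c * ‖x‖ ^ 2 ≤ -B x x := by
  have hK : IsCompact ((N : Set V) ∩ sphere 0 1) :=
    (isCompact_sphere 0 1).inter_left N.closed_of_finiteDimensional
  obtain ⟨c, hc, hcK⟩ := hK.exists_forall_le' (f := fun x => -B x x) (by fun_prop)
    fun x hx => neg_pos.2 (hneg x hx.1 (ne_zero_of_mem_unit_sphere ⟨x, hx.2⟩))
  refine ⟨c, hc, fun x hx => ?_⟩
  rcases eq_or_ne x 0 with rfl | hx0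
  · simp
  have hunit := hcK (‖x‖⁻¹ • x) ⟨N.smul_mem _ hx, by simp [norm_smul, hx0]⟩
  simp only [map_smul, LinearMap.smul_apply, smul_eq_mul] at hunit
  have hn : 0 < ‖x‖ := norm_pos_iff.2 hx0
  field_simp at hunit
  linarith

variable {B : V →ₗ[ℝ] V →ₗ[ℝ] ℝ} {H f : V}

theorem exists_norm_perpPart_le (hp : IsHyperbolicPair B H f)
    (hneg : ∀ x, B x f = 0 → B x H = 0 → x ≠ 0 → B x x < 0) (χ r a : ℝ) (ξ : V) :
    ∃ R, ∀ r₁ a₁ ξ₁, IsBogomolovSplitting B f χ r ξ a r₁ ξ₁ a₁ →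
      ‖perpPart B H f ξ₁‖ ≤ R := by
  obtain ⟨c, hc, hcoer⟩ := exists_pos_mul_sq_norm_le_neg_apply_self B
    (LinearMap.ker (B.flip f) ⊓ LinearMap.ker (B.flip H)) fun x hx => hneg x hx.1 hx.2
  have hN : ∀ x, B x f = 0 → B x H = 0 → B x x ≤ 0 := fun x hf hH =>
    neg_nonneg.1 ((by positivity : 0 ≤ c * ‖x‖ ^ 2).trans (hcoer x ⟨hf, hH⟩))
  refine ⟨√(|2 * r * a - r ^ 2 * χ - 2 * B ξ f * B ξ H| / c), fun r₁ a₁ ξ₁ hs =>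
    Real.le_sqrt_of_sq_le ((le_div_iff₀ hc).2 ?_)⟩
  linarith [hcoer _ ⟨hp.apply_perpPart_f ξ₁, hp.apply_perpPart_H ξ₁⟩,
    hs.neg_abs_le_apply_perpPart hp hN]

variable {Bset : Set (ℝ × V)}

theorem exists_abs_apply_H_le_of_wall (hp : IsHyperbolicPair B H f)
    (hneg : ∀ x, B x f = 0 → B x H = 0 → x ≠ 0 → B x x < 0) (hBc : IsCompact Bset)
    (χ r a : ℝ) (ξ : V) (hBsub : ∀ p ∈ Bset, B p.2 f = 0 ∧ B p.2 H = 0 ∧ r * p.1 ≠ B ξ f) :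
    ∃ C, ∀ r₁ a₁ ξ₁, IsBogomolovSplitting B f χ r ξ a r₁ ξ₁ a₁ →
      (∃ p ∈ Bset, B (p.1 • H + p.2) (r • ξ₁ - r₁ • ξ) = r * a₁ - r₁ * a) →
      |B ξ₁ H| ≤ C ∧ |a₁| ≤ C := by
  obtain ⟨R, hR⟩ := exists_norm_perpPart_le hp hneg χ r a ξ
  have hN : ∀ x, B x f = 0 → B x H = 0 → B x x ≤ 0 := fun x hf hH =>
    (eq_or_ne x 0).elim (fun h => by simp [h]) fun h => (hneg x hf hH h).le
  set d := B ξ f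
  set κ := |d * B ξ H - r * a| + r ^ 2 * |χ|
  -- the wall through `(s, α)` reads `r * a₁ = r * s * B ξ₁ H + w ((s, α), perpPart B H f ξ₁, r₁)`
  let w : (ℝ × V) × V × ℝ → ℝ := fun q =>
    r * B q.1.2 q.2.1 - q.2.2 * (q.1.1 * B ξ H + B q.1.2 (perpPart B H f ξ) - a)
  have hK := hBc.prod ((isCompact_closedBall (0 : V) R).prod (isCompact_Icc (a := 0) (b := r)))
  obtain ⟨Cy, hCy⟩ := hK.exists_bound_of_continuousOn (f := fun q => (κ + |w q|) / |d - r * q.1.1|)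
    (ContinuousOn.div (by fun_prop) (by fun_prop) fun q hq =>
      abs_ne_zero.2 (sub_ne_zero.2 (hBsub q.1 hq.1).2.2.symm))
  refine ⟨max Cy ((κ + |d| * Cy) / r), fun r₁ a₁ ξ₁ hs ⟨p, hpB, hwall⟩ => ?_⟩
  obtain ⟨hαf, hαH, hsd⟩ := hBsub p hpB
  have hκ := hs.abs_sub_le hp hN
  have hw : (d - r * p.1) * B ξ₁ H = d * B ξ₁ H - r * a₁ + w (p, perpPart B H f ξ₁, r₁) := by
    rw [hp.apply_smul_add_eq hαf hαH] at hwall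
    simp only [map_sub, map_smul, smul_eq_mul, LinearMap.sub_apply, LinearMap.smul_apply] at hwall
    simp only [w]
    linear_combination -hwall
  have hpos : 0 < |d - r * p.1| := abs_pos.2 (sub_ne_zero.2 hsd.symm)
  have hy : |B ξ₁ H| ≤ Cy := calc
    |B ξ₁ H| = |(d - r * p.1) * B ξ₁ H| / |d - r * p.1| := by
      rw [abs_mul, mul_div_cancel_left₀ _ hpos.ne']
    _ ≤ (κ + |w (p, perpPart B H f ξ₁, r₁)|) / |d - r * p.1| := by
      gcongr
      rw [hw]
      exact (abs_add_le _ _).trans (by gcongr)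
    _ ≤ Cy := (le_abs_self _).trans
      (hCy _ ⟨hpB, mem_closedBall_zero_iff.2 (hR _ _ _ hs), hs.pos.le, hs.lt.le⟩)
  exact ⟨le_max_of_le_left hy,
    le_max_of_le_right (abs_le_div_of_abs_sub_le (hs.pos.trans hs.lt) hκ hy)⟩

theorem exists_norm_le_and_abs_le_of_wall (hp : IsHyperbolicPair B H f)
    (hneg : ∀ x, B x f = 0 → B x H = 0 → x ≠ 0 → B x x < 0) (hBc : IsCompact Bset)
    (χ r a : ℝ) (ξ : V) (hBsub : ∀ p ∈ Bset, B p.2 f = 0 ∧ B p.2 H = 0 ∧ r * p.1 ≠ B ξ f) :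
    ∃ C, ∀ r₁ a₁ ξ₁, IsBogomolovSplitting B f χ r ξ a r₁ ξ₁ a₁ →
      (∃ p ∈ Bset, B (p.1 • H + p.2) (r • ξ₁ - r₁ • ξ) = r * a₁ - r₁ * a) →
      ‖ξ₁‖ ≤ C ∧ |a₁| ≤ C := by
  obtain ⟨R, hR⟩ := exists_norm_perpPart_le hp hneg χ r a ξ
  obtain ⟨C, hC⟩ := exists_abs_apply_H_le_of_wall hp hneg hBc χ r a ξ hBsub
  refine ⟨max (|B ξ f| * ‖H‖ + C * ‖f‖ + R) C, fun r₁ a₁ ξ₁ hs hwall => ?_⟩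
  obtain ⟨hy, ha⟩ := hC r₁ a₁ ξ₁ hs hwall
  refine ⟨le_max_of_le_left ?_, le_max_of_le_right ha⟩
  calc ‖ξ₁‖ = ‖B ξ₁ f • H + B ξ₁ H • f + perpPart B H f ξ₁‖ := by rw [add_perpPart]
    _ ≤ |B ξ₁ f| * ‖H‖ + |B ξ₁ H| * ‖f‖ + ‖perpPart B H f ξ₁‖ := by
      refine (norm_add₃_le ..).trans ?_
      simp only [norm_smul, Real.norm_eq_abs, le_refl]
    _ ≤ |B ξ f| * ‖H‖ + C * ‖f‖ + R := by
      gcongr ?_ * _ + ?_ * _ + ?_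
      exacts [hs.abs_apply_f_le, hR _ _ _ hs]

end Bounds

theorem stmt9_general {V : Type*} [NormedAddCommGroup V] [NormedSpace ℝ V] [FiniteDimensional ℝ V]
    (B : V →ₗ[ℝ] V →ₗ[ℝ] ℝ) (hBsymm : ∀ x y : V, B x y = B y x)
    (n : ℕ) (b : Module.Basis (Fin n) ℝ V) (Λ : Submodule ℤ V)
    (hΛ : Λ = Submodule.span ℤ (Set.range ⇑b))
    (H f : V)
    (hHH : B H H = 0) (hff : B f f = 0) (hHf : B H f = 1)
    (hneg : ∀ x : V, B x f = 0 → B x H = 0 → x ≠ 0 → B x x < 0)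
    (m : ℕ) (hm : 0 < m)
    (r : ℤ) (ξ : V) (a χ : ℚ)
    (Bset : Set (ℝ × V)) (hBc : IsCompact Bset)
    (hBsub : ∀ p ∈ Bset, B p.2 f = 0 ∧ B p.2 H = 0 ∧ (r : ℝ) * p.1 ≠ B ξ f) :
    {t : ℤ × V × ℚ | t.2.1 ∈ Λ ∧ (∃ z : ℤ, (m : ℚ) * t.2.2 = (z : ℚ)) ∧
      0 < t.1 ∧ t.1 < r ∧
      (r : ℝ) * B t.2.1 f = (t.1 : ℝ) * B ξ f ∧
      -((t.1 : ℝ) ^ 2 * (χ : ℝ)) ≤ B t.2.1 t.2.1 - 2 * (t.1 : ℝ) * ((t.2.2 : ℚ) : ℝ) ∧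
      -(((r - t.1 : ℤ) : ℝ) ^ 2 * (χ : ℝ))
        ≤ B (ξ - t.2.1) (ξ - t.2.1) - 2 * ((r - t.1 : ℤ) : ℝ) * ((a : ℝ) - ((t.2.2 : ℚ) : ℝ)) ∧
      (∃ sα ∈ Bset, B (sα.1 • H + sα.2) (r • t.2.1 - t.1 • ξ)
          = (r : ℝ) * ((t.2.2 : ℚ) : ℝ) - (t.1 : ℝ) * (a : ℝ))}.Finite := by
  subst hΛ
  obtain ⟨C, hC⟩ := exists_norm_le_and_abs_le_of_wall ⟨hBsymm, hHH, hff, hHf⟩ hneg hBc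
    (χ : ℝ) r a ξ hBsub
  have hball := ZSpan.setFinite_inter b (isBounded_closedBall (x := 0) (r := C))
  refine ((finite_Icc 1 (r - 1)).prod
    (hball.prod (finite_setOf_abs_le_of_mul_eq_intCast hm C))).subset ?_
  rintro ⟨r₁, ξ₁, a₁⟩ ⟨hξ₁, ha₁, h0, hlt, hslope, hbog₁, hbog₂, hwall⟩
  have hs : IsBogomolovSplitting B f (χ : ℝ) r ξ a r₁ ξ₁ a₁ :=
    ⟨by exact_mod_cast h0, by exact_mod_cast hlt, hslope, hbog₁, by exact_mod_cast hbog₂⟩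
  obtain ⟨hξC, haC⟩ := hC r₁ a₁ ξ₁ hs (by simpa only [← Int.cast_smul_eq_zsmul ℝ] using hwall)
  exact ⟨⟨h0, by omega⟩, ⟨mem_closedBall_zero_iff.2 hξC, hξ₁⟩, haC, ha₁⟩

/-- Positive-rank part of the local finiteness of walls: for a compact subset
`Bset` of `{(s, α) ∈ ℝ × N_ℝ : rs ≠ d}`, only finitely many Mukai vectors
`v₁ = (r₁, ξ₁, a₁)` with `0 < r₁ < r`, `r(ξ₁·f) = r₁(ξ·f)`, the Bogomolov
bounds `⟨v₁,v₁⟩ ≥ −r₁²χ`, `⟨v − v₁, v − v₁⟩ ≥ −(r − r₁)²χ`, define a wall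
`W_{v₁} = {(s, α) : (sH + α, rξ₁ − r₁ξ) = ra₁ − r₁a}` meeting `Bset`. -/
theorem stmt9 {V : Type*} [NormedAddCommGroup V] [NormedSpace ℝ V] [FiniteDimensional ℝ V]
    (B : V →ₗ[ℝ] V →ₗ[ℝ] ℝ) (hBsymm : ∀ x y : V, B x y = B y x)
    (n : ℕ) (b : Module.Basis (Fin n) ℝ V) (Λ : Submodule ℤ V)
    (hΛ : Λ = Submodule.span ℤ (Set.range ⇑b))
    (hBint : ∀ x ∈ Λ, ∀ y ∈ Λ, ∃ z : ℤ, B x y = (z : ℝ))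
    (H f : V)
    (hHH : B H H = 0) (hff : B f f = 0) (hHf : B H f = 1)
    (hHrat : ∃ q : ℤ, q ≠ 0 ∧ q • H ∈ Λ) (hfrat : ∃ q : ℤ, q ≠ 0 ∧ q • f ∈ Λ)
    (hneg : ∀ x : V, B x f = 0 → B x H = 0 → x ≠ 0 → B x x < 0)
    (m : ℕ) (hm : 0 < m)
    (r : ℤ) (hr : 0 < r) (ξ : V) (hξ : ξ ∈ Λ) (a χ : ℚ)
    (ha : ∃ z : ℤ, (m : ℚ) * a = (z : ℚ))
    (Bset : Set (ℝ × V)) (hBc : IsCompact Bset)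
    (hBsub : ∀ p ∈ Bset, B p.2 f = 0 ∧ B p.2 H = 0 ∧ (r : ℝ) * p.1 ≠ B ξ f) :
    {t : ℤ × V × ℚ | t.2.1 ∈ Λ ∧ (∃ z : ℤ, (m : ℚ) * t.2.2 = (z : ℚ)) ∧
      0 < t.1 ∧ t.1 < r ∧
      (r : ℝ) * B t.2.1 f = (t.1 : ℝ) * B ξ f ∧
      -((t.1 : ℝ) ^ 2 * (χ : ℝ)) ≤ B t.2.1 t.2.1 - 2 * (t.1 : ℝ) * ((t.2.2 : ℚ) : ℝ) ∧
      -(((r - t.1 : ℤ) : ℝ) ^ 2 * (χ : ℝ))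
        ≤ B (ξ - t.2.1) (ξ - t.2.1) - 2 * ((r - t.1 : ℤ) : ℝ) * ((a : ℝ) - ((t.2.2 : ℚ) : ℝ)) ∧
      (∃ sα ∈ Bset, B (sα.1 • H + sα.2) (r • t.2.1 - t.1 • ξ)
          = (r : ℝ) * ((t.2.2 : ℚ) : ℝ) - (t.1 : ℝ) * (a : ℝ))}.Finite :=
  stmt9_general B hBsymm n b Λ hΛ H f hHH hff hHf hneg m hm r ξ a χ Bset hBc hBsub
end

section
/- Let v = (r, ξ, a) and v₁ = (r₁, ξ₁, a₁) be elements of the Mukai lattice satisfying the wall proportionality r₁·(ξ·f) = r·(ξ₁·f). Then u := r₁·v − r·v₁ is isotropic, i.e. ⟨u, u⟩ = 0. In particular, if v and v₁ lie in the integral Mukai lattice ℤ ⊕ (ℤσ ⊕ ℤf) ⊕ ℤ and r·v₁ ≠ r₁·v, then the lattice L := (ℚv + ℚv₁) ∩ (ℤ ⊕ (ℤσ ⊕ ℤf) ⊕ ℤ) contains a nonzero isotropic Mukai vector. (This is the paper's Lemma that for an elliptic K3 surface with NS(X) = ℤσ + ℤf, the lattice associated to any wall contains an isotropic Mukai vector.)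 -/
/-!
Both ranks and fibre degrees cancel in `u = r₁v − rv₁`, so `u = (0, η, b)` with `η · f = 0`.
Since `σ · f ≠ 0` and `f · f = 0`, the only classes orthogonal to `f` are the multiples of `f`, so
`⟨u, u⟩ = η² = 0`. For integral `v, v₁` the ranks are integers, hence `u` is an integral
combination of `v, v₁` and lies in the lattice; it is nonzero exactly when `rv₁ ≠ r₁v`.
-/

section Isotropy

variable {K V : Type*} [Field K] [AddCommGroup V] [Module K V] (B : V →ₗ[K] V →ₗ[K] K)

theorem apply_self_eq_zero_of_apply_right_eq_zero {σ f : V} (hσf : B σ f ≠ 0) (hff : B f f = 0)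
    (hspan : ∀ x : V, ∃ p q : K, x = p • σ + q • f) {x : V} (hx : B x f = 0) : B x x = 0 := by
  obtain ⟨p, q, rfl⟩ := hspan x
  have hp : p = 0 := by
    simpa [hff, hσf] using hx
  simp [hp, hff]

def mukaiPairing (u w : K × V × K) : K :=
  B u.2.1 w.2.1 - u.1 * w.2.2 - u.2.2 * w.1

theorem mukaiPairing_self_of_fst_eq_zero {u : K × V × K} (hu : u.1 = 0) :
    mukaiPairing B u u = B u.2.1 u.2.1 := by
  simp [mukaiPairing, hu]

theorem mukaiPairing_wall_self_eq_zero {σ f : V} (hσf : B σ f ≠ 0) (hff : B f f = 0)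
    (hspan : ∀ x : V, ∃ p q : K, x = p • σ + q • f) {r a r₁ a₁ : K} {ξ ξ₁ : V}
    (hwall : r₁ * B ξ f = r * B ξ₁ f) :
    mukaiPairing B (r₁ • (r, ξ, a) - r • (r₁, ξ₁, a₁)) (r₁ • (r, ξ, a) - r • (r₁, ξ₁, a₁)) = 0 := by
  rw [mukaiPairing_self_of_fst_eq_zero B (by simp [mul_comm])]
  refine apply_self_eq_zero_of_apply_right_eq_zero B hσf hff hspan ?_
  simp [hwall]

end Isotropy

section Lattice

variable {V : Type*} [AddCommGroup V] [Module ℚ V]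

def integralMukaiLattice (σ f : V) : AddSubgroup (ℚ × V × ℚ) :=
  (Int.castAddHom ℚ).range.prod
    ((Submodule.span ℤ {σ, f}).toAddSubgroup.prod (Int.castAddHom ℚ).range)

theorem mem_integralMukaiLattice_iff {σ f : V} {w : ℚ × V × ℚ} :
    w ∈ integralMukaiLattice σ f ↔
      (∃ z : ℤ, w.1 = (z : ℚ)) ∧
      (∃ p q : ℤ, w.2.1 = (p : ℚ) • σ + (q : ℚ) • f) ∧
      (∃ z : ℤ, w.2.2 = (z : ℚ)) := by
  simp only [integralMukaiLattice, AddSubgroup.mem_prod, AddMonoidHom.mem_range,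
    Int.coe_castAddHom, Submodule.mem_toAddSubgroup, Submodule.mem_span_pair,
    Int.cast_smul_eq_zsmul]
  simp only [eq_comm]

end Lattice

theorem stmt12_general {V : Type*} [AddCommGroup V] [Module ℚ V]
    (B : V →ₗ[ℚ] V →ₗ[ℚ] ℚ)
    (σ f : V)
    (hσf : B σ f = 1) (hff : B f f = 0)
    (hspan : ∀ x : V, ∃ p q : ℚ, x = p • σ + q • f)
    (r a r₁ a₁ : ℚ) (ξ ξ₁ : V)
    (hwall : r₁ * B ξ f = r * B ξ₁ f) :
    let pair : ℚ × V × ℚ → ℚ × V × ℚ → ℚ :=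
      fun u w => B u.2.1 w.2.1 - u.1 * w.2.2 - u.2.2 * w.1
    let v : ℚ × V × ℚ := (r, ξ, a)
    let v₁ : ℚ × V × ℚ := (r₁, ξ₁, a₁)
    let u : ℚ × V × ℚ := r₁ • v - r • v₁
    let integral : ℚ × V × ℚ → Prop := fun w =>
      (∃ z : ℤ, w.1 = (z : ℚ)) ∧
      (∃ p q : ℤ, w.2.1 = (p : ℚ) • σ + (q : ℚ) • f) ∧
      (∃ z : ℤ, w.2.2 = (z : ℚ))
    (pair u u = 0 ∧
     (integral v → integral v₁ → r • v₁ ≠ r₁ • v →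
       ∃ w : ℚ × V × ℚ, (∃ p q : ℚ, w = p • v + q • v₁) ∧
         integral w ∧ w ≠ 0 ∧ pair w w = 0)) := by
  intro pair v v₁ u integral
  have hu : pair u u = 0 :=
    mukaiPairing_wall_self_eq_zero B (by simp [hσf]) hff hspan hwall
  refine ⟨hu, fun hv hv₁ hne => ⟨u, ⟨r₁, -r, by simp [u, sub_eq_add_neg]⟩, ?_,
    sub_ne_zero_of_ne hne.symm, hu⟩⟩
  obtain ⟨z, hz⟩ := hv.1
  obtain ⟨z₁, hz₁⟩ := hv₁.1
  have hu_int : u = z₁ • v - z • v₁ := by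
    simp only [u, show r = z from hz, show r₁ = z₁ from hz₁, Int.cast_smul_eq_zsmul]
  refine mem_integralMukaiLattice_iff.1 ?_
  rw [hu_int]
  exact sub_mem (zsmul_mem (mem_integralMukaiLattice_iff.2 hv) z₁)
    (zsmul_mem (mem_integralMukaiLattice_iff.2 hv₁) z)

/-- For an elliptic K3 surface with `NS(X) = ℤσ + ℤf` (so `V = ℚσ ⊕ ℚf` with
`(σ²) = −2`, `(σ·f) = 1`, `(f²) = 0`): if `v = (r, ξ, a)` and
`v₁ = (r₁, ξ₁, a₁)` satisfy the wall proportionality `r₁(ξ·f) = r(ξ₁·f)`,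
then `u := r₁v − rv₁` is isotropic; in particular, if `v, v₁` are integral and
`rv₁ ≠ r₁v`, then `L = (ℚv + ℚv₁) ∩ (ℤ ⊕ (ℤσ ⊕ ℤf) ⊕ ℤ)` contains a nonzero
isotropic Mukai vector. -/
theorem stmt12 {V : Type*} [AddCommGroup V] [Module ℚ V]
    (B : V →ₗ[ℚ] V →ₗ[ℚ] ℚ)
    (σ f : V)
    (hσσ : B σ σ = -2) (hσf : B σ f = 1) (hfσ : B f σ = 1) (hff : B f f = 0)
    (hspan : ∀ x : V, ∃ p q : ℚ, x = p • σ + q • f)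
    (r a r₁ a₁ : ℚ) (ξ ξ₁ : V)
    (hwall : r₁ * B ξ f = r * B ξ₁ f) :
    let pair : ℚ × V × ℚ → ℚ × V × ℚ → ℚ :=
      fun u w => B u.2.1 w.2.1 - u.1 * w.2.2 - u.2.2 * w.1
    let v : ℚ × V × ℚ := (r, ξ, a)
    let v₁ : ℚ × V × ℚ := (r₁, ξ₁, a₁)
    let u : ℚ × V × ℚ := r₁ • v - r • v₁
    let integral : ℚ × V × ℚ → Prop := fun w =>
      (∃ z : ℤ, w.1 = (z : ℚ)) ∧
      (∃ p q : ℤ, w.2.1 = (p : ℚ) • σ + (q : ℚ) • f) ∧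
      (∃ z : ℤ, w.2.2 = (z : ℚ))
    (pair u u = 0 ∧
     (integral v → integral v₁ → r • v₁ ≠ r₁ • v →
       ∃ w : ℚ × V × ℚ, (∃ p q : ℚ, w = p • v + q • v₁) ∧
         integral w ∧ w ≠ 0 ∧ pair w w = 0)) :=
  stmt12_general B σ f hσf hff hspan r a r₁ a₁ ξ ξ₁ hwall
end
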